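/- Let n ≥ 3 and let χ be a map from the additive group of symmetric n×n integer matrices to the multiplicative group ℂ* of nonzero complex numbers satisfying χ(B₁ + B₂) = χ(B₁)·χ(B₂) for all symmetric integer matrices B₁, B₂, and χ(A·B·Aᵀ) = χ(B) for every A ∈ SL(n,ℤ) and every symmetric integer matrix B. Then χ(B) = 1 for all symmetric integer matrices B. -/

import Mathlib

/-!
Conjugating `E_jk + E_kj` by the transvection `1 + E_ij` adds `E_ik + E_ki`, so an invariant
character kills `E_ik + E_ki` as soon as there is a third index `j` (this is where `n ≥ 3`
enters); conjugating `E_jj` by the same transvection then shows that it kills `E_ii` too.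
These matrices generate the symmetric integer matrices: composing `χ` with the additive
retraction `symmOfUpper` onto them gives a character of all integer matrices, which is
determined by its values on the matrix units.
-/

open Matrix

namespace Matrix

variable {n R : Type*}

section SymmOfUpper

variable [LinearOrder n] [AddCommMonoid R]

def symmOfUpper : Matrix n n R →+ Matrix n n R where
  toFun M := of fun i j ↦ if i ≤ j then M i j else M j i
  map_zero' := by ext; simp
  map_add' M N := by ext; simp only [add_apply, of_apply]; split_ifs <;> rfl

lemma symmOfUpper_apply (M : Matrix n n R) (i j : n) :
    symmOfUpper M i j = if i ≤ j then M i j else M j i :=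
  rfl

lemma transpose_symmOfUpper (M : Matrix n n R) : (symmOfUpper M)ᵀ = symmOfUpper M := by
  ext i j
  simp only [transpose_apply, symmOfUpper_apply]
  split_ifs <;> grind

lemma symmOfUpper_of_transpose_eq {M : Matrix n n R} (hM : Mᵀ = M) : symmOfUpper M = M := by
  ext i j
  rw [symmOfUpper_apply, ite_eq_left_iff, ← transpose_apply M j i, hM]
  exact fun _ ↦ rfl

lemma symmOfUpper_single_of_lt {i j : n} (h : i < j) (a : R) :
    symmOfUpper (single i j a) = single i j a + single j i a := by
  ext k l
  simp only [symmOfUpper_apply, add_apply, single_apply]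
  split_ifs <;> grind

lemma symmOfUpper_single_self (i : n) (a : R) : symmOfUpper (single i i a) = single i i a := by
  ext k l
  simp only [symmOfUpper_apply, single_apply]
  split_ifs <;> grind

lemma symmOfUpper_single_of_gt {i j : n} (h : j < i) (a : R) :
    symmOfUpper (single i j a) = 0 := by
  ext k l
  simp only [symmOfUpper_apply, single_apply, zero_apply]
  split_ifs <;> grind

end SymmOfUpper

section Transvection

variable [Fintype n] [DecidableEq n] [CommRing R]

lemma transvection_mul_mul_transpose (i j : n) (c : R) (X : Matrix n n R) :
    transvection i j c * X * (transvection i j c)ᵀ =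
      X + single i j c * X + X * single j i c + single i j c * X * single j i c := by
  simp only [transvection, transpose_add, transpose_one, transpose_single]
  noncomm_ring

lemma transvection_mul_single_add_single_mul_transpose {j k : n} (hjk : j ≠ k) (i : n) (c : R) :
    transvection i j c * (single j k 1 + single k j 1) * (transvection i j c)ᵀ =
      (single j k 1 + single k j 1) + (single i k c + single k i c) := by
  rw [transvection_mul_mul_transpose]
  simp only [mul_add, add_mul, single_mul_single_same, single_mul_single_of_ne _ _ _ _ hjk,
    single_mul_single_of_ne _ _ _ _ hjk.symm, mul_one, one_mul, add_zero, zero_add]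
  abel

lemma transvection_mul_single_mul_transpose (i j : n) (c : R) :
    transvection i j c * single j j 1 * (transvection i j c)ᵀ =
      single j j 1 + ((single i j c + single j i c) + single i i (c * c)) := by
  rw [transvection_mul_mul_transpose]
  simp only [single_mul_single_same, mul_one, one_mul]
  abel

end Transvection

end Matrix

section SymmetricCharacter

variable {n R G : Type*} [Group G]

lemma map_zero_eq_one_of_map_add [AddZeroClass R] {χ : Matrix n n R → G}
    (hadd : ∀ B₁ B₂ : Matrix n n R, B₁ᵀ = B₁ → B₂ᵀ = B₂ → χ (B₁ + B₂) = χ B₁ * χ B₂) :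
    χ 0 = 1 := by
  simpa using hadd 0 0 transpose_zero transpose_zero

variable [Fintype n] [DecidableEq n] [CommRing R] {χ : Matrix n n R → G}

lemma map_single_add_single_eq_one
    (hadd : ∀ B₁ B₂ : Matrix n n R, B₁ᵀ = B₁ → B₂ᵀ = B₂ → χ (B₁ + B₂) = χ B₁ * χ B₂)
    (hSL : ∀ A : Matrix n n R, A.det = 1 → ∀ B : Matrix n n R, Bᵀ = B → χ (A * B * Aᵀ) = χ B)
    {i j k : n} (hij : i ≠ j) (hjk : j ≠ k) :
    χ (single i k 1 + single k i 1) = 1 := by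
  have h := hSL _ (det_transvection_of_ne i j hij 1) (single j k 1 + single k j 1)
    (by simp [add_comm])
  rwa [transvection_mul_single_add_single_mul_transpose hjk,
    hadd _ _ (by simp [add_comm]) (by simp [add_comm]), mul_eq_left] at h

lemma map_single_self_eq_one
    (hadd : ∀ B₁ B₂ : Matrix n n R, B₁ᵀ = B₁ → B₂ᵀ = B₂ → χ (B₁ + B₂) = χ B₁ * χ B₂)
    (hSL : ∀ A : Matrix n n R, A.det = 1 → ∀ B : Matrix n n R, Bᵀ = B → χ (A * B * Aᵀ) = χ B)
    {i j : n} (hij : i ≠ j) (hoff : χ (single i j 1 + single j i 1) = 1) :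
    χ (single i i 1) = 1 := by
  have h := hSL _ (det_transvection_of_ne i j hij 1) (single j j 1) (transpose_single _ _ _)
  rwa [transvection_mul_single_mul_transpose, hadd _ _ (transpose_single _ _ _)
    (by simp [add_comm]), mul_eq_left, hadd _ _ (by simp [add_comm]) (transpose_single _ _ _),
    hoff, one_mul, mul_one] at h

end SymmetricCharacter

lemma map_eq_one_of_map_single_eq_one {n G : Type*} [Fintype n] [LinearOrder n] [CommGroup G]
    {χ : Matrix n n ℤ → G}
    (hadd : ∀ B₁ B₂ : Matrix n n ℤ, B₁ᵀ = B₁ → B₂ᵀ = B₂ → χ (B₁ + B₂) = χ B₁ * χ B₂)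
    (hoff : ∀ i j : n, i ≠ j → χ (single i j 1 + single j i 1) = 1)
    (hdiag : ∀ i : n, χ (single i i 1) = 1) {B : Matrix n n ℤ} (hB : Bᵀ = B) : χ B = 1 := by
  let ψ : Matrix n n ℤ →+ Additive G :=
    { toFun M := Additive.ofMul (χ (symmOfUpper M))
      map_zero' := by simp [map_zero_eq_one_of_map_add hadd]
      map_add' M N := by simp [hadd _ _ (transpose_symmOfUpper M) (transpose_symmOfUpper N)] }
  have hψ : ψ = 0 := ext_addMonoidHom fun i j ↦ AddMonoidHom.ext_int <| by
    rcases lt_trichotomy i j with h | rfl | h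
    · simp [ψ, symmOfUpper_single_of_lt h, hoff i j h.ne]
    · simp [ψ, symmOfUpper_single_self, hdiag]
    · simp [ψ, symmOfUpper_single_of_gt h, map_zero_eq_one_of_map_add hadd]
  simpa [ψ, symmOfUpper_of_transpose_eq hB] using DFunLike.congr_fun hψ B

/-- for `n ≥ 3`, any character `χ` on the additive group of symmetric
`n × n` integer matrices with values in `ℂ*` that is invariant under the action
`B ↦ A B Aᵀ` of `SL(n,ℤ)` is trivial. -/
theorem stmt15 (n : ℕ) (hn : 3 ≤ n) (χ : Matrix (Fin n) (Fin n) ℤ → ℂˣ)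
    (hadd : ∀ B₁ B₂ : Matrix (Fin n) (Fin n) ℤ,
      B₁ᵀ = B₁ → B₂ᵀ = B₂ → χ (B₁ + B₂) = χ B₁ * χ B₂)
    (hSL : ∀ A : Matrix (Fin n) (Fin n) ℤ, A.det = 1 →
      ∀ B : Matrix (Fin n) (Fin n) ℤ, Bᵀ = B → χ (A * B * Aᵀ) = χ B) :
    ∀ B : Matrix (Fin n) (Fin n) ℤ, Bᵀ = B → χ B = 1 := by
  have hoff : ∀ i j : Fin n, i ≠ j → χ (single i j 1 + single j i 1) = 1 := fun i j hij ↦ by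
    obtain ⟨k, hki, hkj⟩ := Fin.exists_ne_and_ne_of_two_lt i j hn
    exact map_single_add_single_eq_one hadd hSL hki.symm hkj
  have hdiag : ∀ i : Fin n, χ (single i i 1) = 1 := fun i ↦ by
    obtain ⟨j, hji, -⟩ := Fin.exists_ne_and_ne_of_two_lt i i hn
    exact map_single_self_eq_one hadd hSL hji.symm (hoff i j hji.symm)
  exact fun B hB ↦ map_eq_one_of_map_single_eq_one hadd hoff hdiag hB
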